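/- If a piecewise affine function on a cell has the property that its value at the center of each face equals the average of its values at the four corners of that face, then the averaged difference Δ₁ỹ across the cell equals the average of ∂ỹ/∂x₁ over the cell: Δ₁ỹ = ⨍_Q ∂ỹ/∂x₁ dξ (after rescaling). -/

import Mathlib

open MeasureTheory

theorem setIntegral_sub_eq_setIntegral_of_eqOn {α E : Type*} [MeasurableSpace α]
    [NormedAddCommGroup E] [NormedSpace ℝ E] {μ : Measure α} {s : Set α} {f g h : α → E}
    (hs : MeasurableSet s) (hf : IntegrableOn f s μ) (hg : IntegrableOn g s μ)
    (hfg : Set.EqOn (f - g) h s) :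
    ∫ ξ in s, f ξ ∂μ - ∫ ξ in s, g ξ ∂μ = ∫ ξ in s, h ξ ∂μ := by
  rw [← integral_sub hf hg]
  exact setIntegral_congr_fun hs hfg

theorem averaged_difference_eq_cell_mean_general (k : ℝ) (x1 : ℝ) (x' : Fin 2 → ℝ)
    (y g : ℝ → (Fin 2 → ℝ) → Fin 3 → ℝ)
    (S' : Set (Fin 2 → ℝ))
    (hS' : S' = Set.Icc (fun i => x' i - 1/2) (fun i => x' i + 1/2))
    (corner : Fin 4 → Fin 2 → ℝ)
    (hmean : ∀ t ∈ ({x1 - 1/(2*k), x1 + 1/(2*k)} : Set ℝ),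
      (1/4 : ℝ) • ∑ c : Fin 4, y t (corner c) = ∫ ξ in S', y t ξ)
    (hint : ∀ t ∈ ({x1 - 1/(2*k), x1 + 1/(2*k)} : Set ℝ), IntegrableOn (y t) S')
    (hftc : ∀ ξ ∈ S', y (x1 + 1/(2*k)) ξ - y (x1 - 1/(2*k)) ξ =
      ∫ t in (x1 - 1/(2*k))..(x1 + 1/(2*k)), g t ξ) :
    k • ((1/4 : ℝ) • ∑ c : Fin 4, y (x1 + 1/(2*k)) (corner c)
        - (1/4 : ℝ) • ∑ c : Fin 4, y (x1 - 1/(2*k)) (corner c))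
      = k • ∫ ξ in S', ∫ t in (x1 - 1/(2*k))..(x1 + 1/(2*k)), g t ξ := by
  have hleft : x1 - 1/(2*k) ∈ ({x1 - 1/(2*k), x1 + 1/(2*k)} : Set ℝ) := Or.inl rfl
  have hright : x1 + 1/(2*k) ∈ ({x1 - 1/(2*k), x1 + 1/(2*k)} : Set ℝ) := Or.inr rfl
  have hS'meas : MeasurableSet S' := hS' ▸ measurableSet_Icc
  rw [hmean _ hright, hmean _ hleft,
    setIntegral_sub_eq_setIntegral_of_eqOn hS'meas (hint _ hright) (hint _ hleft) hftc]

/-- If the interpolation `y` on a cell has the property that the average of its values at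
the four corners of each of the two `x₁`-faces equals the mean of `y` over that face, and
the fundamental theorem of calculus holds in the `x₁`-direction with derivative `g`, then
the averaged difference `Δ₁y` across the cell equals the mean of `∂y/∂x₁` over the cell. -/
theorem averaged_difference_eq_cell_mean (k : ℝ) (hk : 0 < k) (x1 : ℝ) (x' : Fin 2 → ℝ)
    (y g : ℝ → (Fin 2 → ℝ) → Fin 3 → ℝ)
    (S' : Set (Fin 2 → ℝ))
    (hS' : S' = Set.Icc (fun i => x' i - 1/2) (fun i => x' i + 1/2))
    (corner : Fin 4 → Fin 2 → ℝ)
    (hcorner : corner = ![![x' 0 - 1/2, x' 1 - 1/2], ![x' 0 - 1/2, x' 1 + 1/2],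
      ![x' 0 + 1/2, x' 1 + 1/2], ![x' 0 + 1/2, x' 1 - 1/2]])
    (hmean : ∀ t ∈ ({x1 - 1/(2*k), x1 + 1/(2*k)} : Set ℝ),
      (1/4 : ℝ) • ∑ c : Fin 4, y t (corner c) = ∫ ξ in S', y t ξ)
    (hint : ∀ t ∈ ({x1 - 1/(2*k), x1 + 1/(2*k)} : Set ℝ), IntegrableOn (y t) S')
    (hftc : ∀ ξ ∈ S', y (x1 + 1/(2*k)) ξ - y (x1 - 1/(2*k)) ξ =
      ∫ t in (x1 - 1/(2*k))..(x1 + 1/(2*k)), g t ξ)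
    (hgint : IntegrableOn (fun ξ => ∫ t in (x1 - 1/(2*k))..(x1 + 1/(2*k)), g t ξ) S') :
    k • ((1/4 : ℝ) • ∑ c : Fin 4, y (x1 + 1/(2*k)) (corner c)
        - (1/4 : ℝ) • ∑ c : Fin 4, y (x1 - 1/(2*k)) (corner c))
      = k • ∫ ξ in S', ∫ t in (x1 - 1/(2*k))..(x1 + 1/(2*k)), g t ξ :=
  averaged_difference_eq_cell_mean_general k x1 x' y g S' hS' corner hmean hint hftc
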